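/- (Bernstein inequality for trigonometric polynomials with frequencies in [−b, 0].) If h(x) = Σ_{k=1}^n c_k e^{iλ_k x} with all λ_k ∈ [−b, 0], then ‖h′‖_∞ ≤ b·‖h‖_∞. -/

import Mathlib

/-!
Multiplying `h` by `e^{ibx/2}` moves its frequencies into `[-b/2, b/2]`, where M. Riesz's
interpolation formula expresses the derivative through the values at the nodes
`x ± tₘ`, `tₘ = (2m+1)π/b`. Transported back to `h` it reads
`h'(x) + (ib/2) h(x) = i ∑ₘ wₘ (h(x + tₘ) + h(x - tₘ))` with `wₘ = 2b / (π²(2m+1)²)`;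
for a single exponential `e^{iλx}` this is the Fourier expansion
`∑ₘ cos((2m+1)ψ) / (2m+1)² = π²/8 - πψ/4` on `[0, π]`, taken at `ψ = -λπ/b`.
As `∑ₘ wₘ = b/4`, the right-hand side has modulus at most `b‖h‖/2`, and so has `(b/2) h(x)`.
-/

open Complex Real

lemma hasSum_cos_nat_mul_div_sq {θ : ℝ} (hθ : θ ∈ Set.Icc 0 (2 * π)) :
    HasSum (fun n : ℕ => Real.cos (n * θ) / n ^ 2) (θ ^ 2 / 4 - π * θ / 2 + π ^ 2 / 6) := by
  have hx : θ / (2 * π) ∈ Set.Icc (0 : ℝ) 1 :=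
    ⟨div_nonneg hθ.1 (by positivity), (div_le_one (by positivity)).2 hθ.2⟩
  have := hasSum_one_div_nat_pow_mul_cos one_ne_zero hx
  rw [← bernoulliFun, mul_one, bernoulliFun_two] at this
  convert this using 1
  · ext n
    field_simp
  · have := pi_pos.ne'
    simp only [Nat.factorial, Nat.succ_eq_add_one]
    push_cast
    field_simp
    ring

lemma hasSum_cos_odd_mul_div_sq {ψ : ℝ} (hψ : ψ ∈ Set.Icc 0 π) :
    HasSum (fun m : ℕ => Real.cos ((2 * m + 1) * ψ) / (2 * m + 1) ^ 2)
      (π ^ 2 / 8 - π * ψ / 4) := by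
  obtain ⟨hψ0, hψπ⟩ := hψ
  have hall := hasSum_cos_nat_mul_div_sq (θ := ψ) ⟨hψ0, by linarith [pi_pos]⟩
  have hdouble := hasSum_cos_nat_mul_div_sq (θ := 2 * ψ) ⟨by linarith, by linarith⟩
  set f := fun n : ℕ => Real.cos (n * ψ) / n ^ 2
  have heven : HasSum (fun m => f (2 * m)) (((2 * ψ) ^ 2 / 4 - π * (2 * ψ) / 2 + π ^ 2 / 6) / 4) :=
    (hdouble.div_const 4).congr_fun fun m => by
      simp only [f]
      push_cast
      ring_nf
  have hodd : HasSum (fun m => f (2 * m + 1)) (π ^ 2 / 8 - π * ψ / 4) := by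
    have hinj : Function.Injective fun m : ℕ => 2 * m + 1 := fun _ _ h => by simpa using h
    have h := (hall.summable.comp_injective hinj).hasSum
    have hsplit := (heven.even_add_odd h).unique hall
    rwa [show ∑' m, (f ∘ fun m => 2 * m + 1) m = π ^ 2 / 8 - π * ψ / 4 by linarith] at h
  refine hodd.congr_fun fun m => ?_
  simp only [f]
  push_cast
  ring

noncomputable def rieszWeight (b : ℝ) (m : ℕ) : ℝ := 2 * b / π ^ 2 / (2 * m + 1) ^ 2

noncomputable def rieszNode (b : ℝ) (m : ℕ) : ℝ := (2 * m + 1) * π / b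

lemma rieszWeight_nonneg {b : ℝ} (hb : 0 ≤ b) (m : ℕ) : 0 ≤ rieszWeight b m := by
  unfold rieszWeight
  positivity

lemma hasSum_rieszWeight (b : ℝ) : HasSum (rieszWeight b) (b / 4) := by
  have h := (hasSum_cos_odd_mul_div_sq ⟨le_rfl, pi_pos.le⟩).mul_left (2 * b / π ^ 2)
  rw [show 2 * b / π ^ 2 * (π ^ 2 / 8 - π * 0 / 4) = b / 4 by field_simp; ring] at h
  refine h.congr_fun fun m => ?_
  rw [rieszWeight, mul_zero, Real.cos_zero, mul_one_div]

lemma exp_add_exp_sub (l x t : ℝ) :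
    exp (I * l * (x + t : ℝ)) + exp (I * l * (x - t : ℝ)) =
      2 * Real.cos (l * t) * exp (I * l * x) := by
  rw [ofReal_cos, two_cos, add_mul, ← Complex.exp_add, ← Complex.exp_add]
  push_cast
  ring_nf

lemma hasSum_rieszWeight_mul_exp {b l : ℝ} (hb : 0 < b) (hl : l ∈ Set.Icc (-b) 0) (x : ℝ) :
    HasSum (fun m => (rieszWeight b m : ℂ) * I *
        (exp (I * l * (x + rieszNode b m : ℝ)) + exp (I * l * (x - rieszNode b m : ℝ))))
      (I * (l + b / 2) * exp (I * l * x)) := by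
  set ψ := -l * π / b
  have hψ : ψ ∈ Set.Icc 0 π := by
    constructor
    · have : 0 ≤ -l := by linarith [hl.2]
      positivity
    · rw [div_le_iff₀ hb]
      nlinarith [hl.1, pi_pos]
  have hcos : ∀ m : ℕ, l * rieszNode b m = -((2 * m + 1) * ψ) := fun m => by
    simp only [rieszNode, ψ]
    field_simp
  have hval : I * (l + b / 2) * exp (I * l * x) =
      4 * b / π ^ 2 * I * exp (I * l * x) * ((π ^ 2 / 8 - π * ψ / 4 : ℝ) : ℂ) := by
    have : (b : ℂ) ≠ 0 := ofReal_ne_zero.mpr hb.ne'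
    simp only [ψ]
    push_cast
    field_simp
    ring
  rw [hval]
  refine ((hasSum_ofReal.mpr (hasSum_cos_odd_mul_div_sq hψ)).mul_left _).congr_fun fun m => ?_
  rw [exp_add_exp_sub, hcos, Real.cos_neg, rieszWeight]
  push_cast
  ring

section ExpSum

variable {ι : Type*} [Fintype ι] {c : ι → ℂ} {lam : ι → ℝ} {h : ℝ → ℂ}

lemma hasDerivAt_expSum (hh : ∀ y : ℝ, h y = ∑ k, c k * exp (I * lam k * y)) (x : ℝ) :
    HasDerivAt h (∑ k, c k * (I * lam k * exp (I * lam k * x))) x := by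
  rw [funext hh]
  refine HasDerivAt.fun_sum fun k _ => ?_
  have := (((hasDerivAt_id x).ofReal_comp.const_mul (I * lam k)).cexp).const_mul (c k)
  simpa [mul_comm] using this

lemma norm_le_sum_norm_of_expSum (hh : ∀ y : ℝ, h y = ∑ k, c k * exp (I * lam k * y)) (y : ℝ) :
    ‖h y‖ ≤ ∑ k, ‖c k‖ := by
  rw [hh]
  refine (norm_sum_le _ _).trans_eq (Finset.sum_congr rfl fun k _ => ?_)
  rw [norm_mul, mul_assoc I, ← ofReal_mul, norm_exp_I_mul_ofReal, mul_one]

lemma hasSum_rieszWeight_mul_expSum {b : ℝ} (hb : 0 < b) (hlam : ∀ k, lam k ∈ Set.Icc (-b) 0)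
    (hh : ∀ y : ℝ, h y = ∑ k, c k * exp (I * lam k * y)) (x : ℝ) :
    HasSum (fun m => (rieszWeight b m : ℂ) * I * (h (x + rieszNode b m) + h (x - rieszNode b m)))
      (deriv h x + I * (b / 2) * h x) := by
  have hsum := hasSum_sum fun k (_ : k ∈ Finset.univ) =>
    (hasSum_rieszWeight_mul_exp hb (hlam k) x).mul_left (c k)
  have hval : deriv h x + I * (b / 2) * h x =
      ∑ k, c k * (I * (lam k + b / 2) * exp (I * lam k * x)) := by
    rw [(hasDerivAt_expSum hh x).deriv, hh, Finset.mul_sum, ← Finset.sum_add_distrib]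
    exact Finset.sum_congr rfl fun k _ => by ring
  rw [hval]
  refine hsum.congr_fun fun m => ?_
  rw [hh, hh, mul_add, Finset.mul_sum, Finset.mul_sum, ← Finset.sum_add_distrib]
  exact Finset.sum_congr rfl fun k _ => by ring

end ExpSum

theorem bernstein_trigPoly (b : ℝ) (hb : 0 < b) (n : ℕ) (c : Fin n → ℂ) (lam : Fin n → ℝ)
    (hlam : ∀ k, lam k ∈ Set.Icc (-b) 0)
    (h : ℝ → ℂ)
    (hh : ∀ x : ℝ, h x = ∑ k, c k * Complex.exp (Complex.I * (lam k : ℂ) * (x : ℂ))) :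
    ∀ x : ℝ, ‖deriv h x‖ ≤ b * ⨆ y : ℝ, ‖h y‖ := by
  intro x
  set M := ⨆ y : ℝ, ‖h y‖
  have hM : ∀ y, ‖h y‖ ≤ M :=
    le_ciSup ⟨_, Set.forall_mem_range.2 (norm_le_sum_norm_of_expSum hh)⟩
  have hterm : ∀ m, ‖(rieszWeight b m : ℂ) * I * (h (x + rieszNode b m) + h (x - rieszNode b m))‖
      ≤ rieszWeight b m * (2 * M) := fun m => by
    have hw := rieszWeight_nonneg hb.le m
    rw [norm_mul, norm_mul, norm_real, norm_I, mul_one, Real.norm_of_nonneg hw]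
    exact mul_le_mul_of_nonneg_left ((norm_add_le _ _).trans
      (by linarith [hM (x + rieszNode b m), hM (x - rieszNode b m)])) hw
  have hshift : ‖deriv h x + I * (b / 2) * h x‖ ≤ b / 4 * (2 * M) :=
    (hasSum_rieszWeight_mul_expSum hb hlam hh x).norm_le_of_bounded
      ((hasSum_rieszWeight b).mul_right (2 * M)) hterm
  have hvalue : ‖I * (b / 2) * h x‖ ≤ b / 2 * M := by
    simpa [abs_of_pos hb] using mul_le_mul_of_nonneg_left (hM x) (by positivity : 0 ≤ b / 2)
  calc ‖deriv h x‖ = ‖(deriv h x + I * (b / 2) * h x) - I * (b / 2) * h x‖ := by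
        rw [add_sub_cancel_right]
    _ ≤ b / 4 * (2 * M) + b / 2 * M := (norm_sub_le _ _).trans (add_le_add hshift hvalue)
    _ = b * M := by ring
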